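/- arXiv:2511.17024 — 4 statements merged into one kernel-verified Lean document; each statement's English description precedes it below -/
import Mathlib

section
/- Let ζ : A ⇸ B be a left adjoint Q-distributor with right adjoint ζ*. Then ζ* is itself a left adjoint Q-distributor if and only if ((Y†_A)_♮ ∘ ζ*)(y, λ) = P†A(ζ*(y,−), λ) for every copresheaf λ on A and every object y of B. -/
set_option linter.unusedVariables false

/-- A (small) quantaloid: a category whose hom-sets are complete lattices and
whose composition preserves arbitrary joins in each variable. -/
structure Quantaloid where
  Obj : Type
  Hom : Obj → Obj → Type
  [lat : ∀ X Y : Obj, CompleteLattice (Hom X Y)]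
  comp : ∀ {X Y Z : Obj}, Hom Y Z → Hom X Y → Hom X Z
  one : ∀ X : Obj, Hom X X
  comp_assoc : ∀ {W X Y Z : Obj} (h : Hom Y Z) (g : Hom X Y) (f : Hom W X),
    comp (comp h g) f = comp h (comp g f)
  one_comp : ∀ {X Y : Obj} (f : Hom X Y), comp (one Y) f = f
  comp_one : ∀ {X Y : Obj} (f : Hom X Y), comp f (one X) = f
  comp_sSup : ∀ {X Y Z : Obj} (g : Hom Y Z) (S : Set (Hom X Y)),
    comp g (sSup S) = ⨆ f ∈ S, comp g f
  sSup_comp : ∀ {X Y Z : Obj} (S : Set (Hom Y Z)) (f : Hom X Y),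
    comp (sSup S) f = ⨆ g ∈ S, comp g f

attribute [instance] Quantaloid.lat

namespace Quantaloid

variable {Q : Quantaloid}

/-- Left implication `h ↙ f`, characterized by `g ∘ f ≤ h ↔ g ≤ h ↙ f`. -/
def ldiv {X Y Z : Q.Obj} (h : Q.Hom X Z) (f : Q.Hom X Y) : Q.Hom Y Z :=
  sSup {g : Q.Hom Y Z | Q.comp g f ≤ h}

/-- Right implication `g ↘ h`, characterized by `g ∘ f ≤ h ↔ f ≤ g ↘ h`. -/
def rdiv {X Y Z : Q.Obj} (g : Q.Hom Y Z) (h : Q.Hom X Z) : Q.Hom X Y :=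
  sSup {f : Q.Hom X Y | Q.comp g f ≤ h}

/-- An adjunction `f ⊣ g` in a quantaloid. -/
def Adj {X Y : Q.Obj} (f : Q.Hom X Y) (g : Q.Hom Y X) : Prop :=
  Q.one X ≤ Q.comp g f ∧ Q.comp f g ≤ Q.one Y

lemma comp_le_comp_left {X Y Z : Q.Obj} (g : Q.Hom Y Z) {f f' : Q.Hom X Y}
    (h : f ≤ f') : Q.comp g f ≤ Q.comp g f' := by
  have h2 := Q.comp_sSup g {f, f'}
  rw [sSup_pair, sup_eq_right.mpr h] at h2
  rw [h2]
  exact le_biSup (fun k => Q.comp g k) (Set.mem_insert _ _)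

lemma comp_le_comp_right {X Y Z : Q.Obj} (f : Q.Hom X Y) {g g' : Q.Hom Y Z}
    (h : g ≤ g') : Q.comp g f ≤ Q.comp g' f := by
  have h2 := Q.sSup_comp {g, g'} f
  rw [sSup_pair, sup_eq_right.mpr h] at h2
  rw [h2]
  exact le_biSup (fun k => Q.comp k f) (Set.mem_insert _ _)

lemma comp_le_comp {X Y Z : Q.Obj} {g g' : Q.Hom Y Z} {f f' : Q.Hom X Y}
    (hg : g ≤ g') (hf : f ≤ f') : Q.comp g f ≤ Q.comp g' f' :=
  (comp_le_comp_right f hg).trans (comp_le_comp_left g' hf)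

lemma comp_iSup {ι : Sort*} {X Y Z : Q.Obj} (g : Q.Hom Y Z) (u : ι → Q.Hom X Y) :
    Q.comp g (⨆ i, u i) = ⨆ i, Q.comp g (u i) := by
  rw [iSup, Q.comp_sSup, iSup_range]

lemma iSup_comp {ι : Sort*} {X Y Z : Q.Obj} (u : ι → Q.Hom Y Z) (f : Q.Hom X Y) :
    Q.comp (⨆ i, u i) f = ⨆ i, Q.comp (u i) f := by
  rw [iSup, Q.sSup_comp, iSup_range]

lemma le_ldiv_iff {X Y Z : Q.Obj} {h : Q.Hom X Z} {f : Q.Hom X Y} {g : Q.Hom Y Z} :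
    g ≤ ldiv h f ↔ Q.comp g f ≤ h := by
  constructor
  · intro hg
    refine (comp_le_comp_right f hg).trans ?_
    rw [ldiv, Q.sSup_comp]
    exact iSup₂_le fun k hk => hk
  · intro hg; exact le_sSup hg

lemma ldiv_comp_le {X Y Z : Q.Obj} (h : Q.Hom X Z) (f : Q.Hom X Y) :
    Q.comp (ldiv h f) f ≤ h := le_ldiv_iff.mp le_rfl

lemma le_rdiv_iff {X Y Z : Q.Obj} {g : Q.Hom Y Z} {h : Q.Hom X Z} {f : Q.Hom X Y} :
    f ≤ rdiv g h ↔ Q.comp g f ≤ h := by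
  constructor
  · intro hf
    refine (comp_le_comp_left g hf).trans ?_
    rw [rdiv, Q.comp_sSup]
    exact iSup₂_le fun k hk => hk
  · intro hf; exact le_sSup hf

lemma comp_rdiv_le {X Y Z : Q.Obj} (g : Q.Hom Y Z) (h : Q.Hom X Z) :
    Q.comp g (rdiv g h) ≤ h := le_rdiv_iff.mp le_rfl

end Quantaloid

open Quantaloid

/-- A `Q`-category: a `Q`-typed set (presented as a family of fibers over the
objects of `Q`) with hom-arrows satisfying the unit and composition laws. -/
structure QCat (Q : Quantaloid) where
  El : Q.Obj → Type
  hom : ∀ {X Y : Q.Obj}, El X → El Y → Q.Hom X Y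
  one_le : ∀ {X : Q.Obj} (x : El X), Q.one X ≤ hom x x
  comp_le : ∀ {X Y Z : Q.Obj} (x : El X) (y : El Y) (z : El Z),
    Q.comp (hom y z) (hom x y) ≤ hom x z

/-- A `Q`-distributor `A ⇸ B`. -/
structure QDist {Q : Quantaloid} (A B : QCat Q) where
  d : ∀ {X Y : Q.Obj}, A.El X → B.El Y → Q.Hom X Y
  dl : ∀ {X Y Y' : Q.Obj} (x : A.El X) (y' : B.El Y') (y : B.El Y),
    Q.comp (B.hom y' y) (d x y') ≤ d x y
  dr : ∀ {X X' Y : Q.Obj} (x : A.El X) (x' : A.El X') (y : B.El Y),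
    Q.comp (d x' y) (A.hom x x') ≤ d x y

namespace QDist

variable {Q : Quantaloid} {A B C : QCat Q}

/-- Composition of `Q`-distributors: `(ψ ∘ φ)(x,z) = ⋁_y ψ(y,z) ∘ φ(x,y)`. -/
def comp (ψ : QDist B C) (φ : QDist A B) : QDist A C where
  d x z := ⨆ w : Σ Y : Q.Obj, B.El Y, Q.comp (ψ.d w.2 z) (φ.d x w.2)
  dl x z' z := by
    rw [comp_iSup]
    refine iSup_le fun w => le_iSup_of_le w ?_
    rw [← Q.comp_assoc]
    exact comp_le_comp_right _ (ψ.dl w.2 z' z)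
  dr x x' z := by
    rw [iSup_comp]
    refine iSup_le fun w => le_iSup_of_le w ?_
    rw [Q.comp_assoc]
    exact comp_le_comp_left _ (φ.dr x x' w.2)

/-- The identity distributor on `A`, given by the hom-arrows of `A`. -/
def id (A : QCat Q) : QDist A A :=
  ⟨A.hom, fun x y' y => A.comp_le x y' y, fun x x' y => A.comp_le x x' y⟩

end QDist

/-- Adjunction `φ ⊣ ψ` in the quantaloid `Q-Dist`: `A ≤ ψ ∘ φ` and `φ ∘ ψ ≤ B`. -/
def DAdj {Q : Quantaloid} {A B : QCat Q} (φ : QDist A B) (ψ : QDist B A) : Prop :=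
  (∀ {X X' : Q.Obj} (x : A.El X) (x' : A.El X'),
      A.hom x x' ≤ ((ψ.comp φ)).d x x') ∧
  (∀ {Y Y' : Q.Obj} (y : B.El Y) (y' : B.El Y'),
      ((φ.comp ψ)).d y y' ≤ B.hom y y')

/-- `φ` is a left adjoint `Q`-distributor. -/
def QDist.IsLeftAdj {Q : Quantaloid} {A B : QCat Q} (φ : QDist A B) : Prop :=
  ∃ ψ : QDist B A, DAdj φ ψ

/-- `φ` is a right adjoint `Q`-distributor. -/
def QDist.IsRightAdj {Q : Quantaloid} {A B : QCat Q} (φ : QDist A B) : Prop :=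
  ∃ η : QDist B A, DAdj η φ

/-- A `Q`-functor `A → B` (type-preserving by construction). -/
structure QFun {Q : Quantaloid} (A B : QCat Q) where
  map : ∀ {X : Q.Obj}, A.El X → B.El X
  mono : ∀ {X Y : Q.Obj} (x : A.El X) (y : A.El Y),
    A.hom x y ≤ B.hom (map x) (map y)

namespace QFun

variable {Q : Quantaloid} {A B : QCat Q}

/-- The graph `F_♮(x,y) = B(F x, y)` of a `Q`-functor. -/
def graph (F : QFun A B) : QDist A B where
  d x y := B.hom (F.map x) y
  dl x y' y := B.comp_le _ _ _
  dr x x' y := (comp_le_comp_left _ (F.mono x x')).trans (B.comp_le _ _ _)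

/-- The cograph `F^♮(y,x) = B(y, F x)` of a `Q`-functor. -/
def cograph (F : QFun A B) : QDist B A where
  d y x := B.hom y (F.map x)
  dl y x' x := (comp_le_comp_right _ (F.mono x' x)).trans (B.comp_le _ _ _)
  dr y y' x := B.comp_le _ _ _

end QFun

/-- Adjunction `F ⊣ G` of `Q`-functors: `1 ≤ G ∘ F` and `F ∘ G ≤ 1` pointwise. -/
def FAdj {Q : Quantaloid} {A B : QCat Q} (F : QFun A B) (G : QFun B A) : Prop :=
  (∀ {X : Q.Obj} (x : A.El X), Q.one X ≤ A.hom x (G.map (F.map x))) ∧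
  (∀ {Y : Q.Obj} (y : B.El Y), Q.one Y ≤ B.hom (F.map (G.map y)) y)

/-- A presheaf on `A` of type `X`: a distributor `A ⇸ *_X`. -/
structure Presheaf {Q : Quantaloid} (A : QCat Q) (X : Q.Obj) where
  p : ∀ {W : Q.Obj}, A.El W → Q.Hom W X
  act : ∀ {W W' : Q.Obj} (x : A.El W) (x' : A.El W'),
    Q.comp (p x') (A.hom x x') ≤ p x

/-- A copresheaf on `A` of type `X`: a distributor `*_X ⇸ A`. -/
structure Copresheaf {Q : Quantaloid} (A : QCat Q) (X : Q.Obj) where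
  p : ∀ {W : Q.Obj}, A.El W → Q.Hom X W
  act : ∀ {W W' : Q.Obj} (x : A.El W) (x' : A.El W'),
    Q.comp (A.hom x x') (p x) ≤ p x'

variable {Q : Quantaloid}

/-- The presheaf `Q`-category `PA`, with `PA(μ,μ') = μ' ↙ μ`. -/
def PCat (A : QCat Q) : QCat Q where
  El X := Presheaf A X
  hom μ μ' := ⨅ w : Σ W : Q.Obj, A.El W, ldiv (μ'.p w.2) (μ.p w.2)
  one_le μ := le_iInf fun w => le_ldiv_iff.mpr (by rw [Q.one_comp])
  comp_le μ μ' μ'' := le_iInf fun w => le_ldiv_iff.mpr (by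
    rw [Q.comp_assoc]
    have h1 : Q.comp (⨅ w : Σ W : Q.Obj, A.El W, ldiv (μ'.p w.2) (μ.p w.2)) (μ.p w.2)
        ≤ μ'.p w.2 :=
      (comp_le_comp_right _ (iInf_le _ w)).trans (ldiv_comp_le _ _)
    have h2 : Q.comp (⨅ w : Σ W : Q.Obj, A.El W, ldiv (μ''.p w.2) (μ'.p w.2)) (μ'.p w.2)
        ≤ μ''.p w.2 :=
      (comp_le_comp_right _ (iInf_le _ w)).trans (ldiv_comp_le _ _)
    exact (comp_le_comp_left _ h1).trans h2)

/-- The copresheaf `Q`-category `P†A`, with `P†A(λ,λ') = λ' ↘ λ`. -/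
def PdCat (A : QCat Q) : QCat Q where
  El X := Copresheaf A X
  hom l l' := ⨅ w : Σ W : Q.Obj, A.El W, rdiv (l'.p w.2) (l.p w.2)
  one_le l := le_iInf fun w => le_rdiv_iff.mpr (by rw [Q.comp_one])
  comp_le l l' l'' := le_iInf fun w => le_rdiv_iff.mpr (by
    rw [← Q.comp_assoc]
    have h1 : Q.comp (l''.p w.2) (⨅ w : Σ W : Q.Obj, A.El W, rdiv (l''.p w.2) (l'.p w.2))
        ≤ l'.p w.2 :=
      (comp_le_comp_left _ (iInf_le _ w)).trans (comp_rdiv_le _ _)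
    have h2 : Q.comp (l'.p w.2) (⨅ w : Σ W : Q.Obj, A.El W, rdiv (l'.p w.2) (l.p w.2))
        ≤ l.p w.2 :=
      (comp_le_comp_left _ (iInf_le _ w)).trans (comp_rdiv_le _ _)
    exact (comp_le_comp_right _ h1).trans h2)

/-- The Yoneda presheaf `Y_A(a) = A(−,a)`. -/
def yo (A : QCat Q) {X : Q.Obj} (a : A.El X) : Presheaf A X :=
  ⟨fun x => A.hom x a, fun x x' => A.comp_le x x' a⟩

/-- The co-Yoneda copresheaf `Y†_A(a) = A(a,−)`. -/
def coyo (A : QCat Q) {X : Q.Obj} (a : A.El X) : Copresheaf A X :=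
  ⟨fun x => A.hom a x, fun x x' => A.comp_le a x x'⟩

/-- The Yoneda embedding as a `Q`-functor `A → PA`. -/
def yoF (A : QCat Q) : QFun A (PCat A) where
  map a := yo A a
  mono a b := le_iInf fun w => le_ldiv_iff.mpr (A.comp_le w.2 a b)

/-- The co-Yoneda embedding as a `Q`-functor `A → P†A`. -/
def coyoF (A : QCat Q) : QFun A (PdCat A) where
  map a := coyo A a
  mono a b := le_iInf fun w => le_rdiv_iff.mpr (A.comp_le a b w.2)

/-- Composite `μ ∘ φ` of a presheaf on `B` with a distributor `φ : A ⇸ B`. -/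
def compP {A B : QCat Q} {X : Q.Obj} (μ : Presheaf B X) (φ : QDist A B) :
    Presheaf A X where
  p x := ⨆ w : Σ W : Q.Obj, B.El W, Q.comp (μ.p w.2) (φ.d x w.2)
  act x x' := by
    rw [iSup_comp]
    refine iSup_le fun w => le_iSup_of_le w ?_
    rw [Q.comp_assoc]
    exact comp_le_comp_left _ (φ.dr x x' w.2)

/-- The `Q`-functor `PB → PA`, `μ ↦ μ ∘ φ`, induced by a distributor `φ : A ⇸ B`. -/
def compF {A B : QCat Q} (φ : QDist A B) : QFun (PCat B) (PCat A) where
  map μ := compP μ φ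
  mono μ μ' := le_iInf fun w => le_ldiv_iff.mpr (by
    simp only [compP]
    rw [comp_iSup]
    refine iSup_le fun u => le_iSup_of_le u ?_
    rw [← Q.comp_assoc]
    refine comp_le_comp_right _ ?_
    exact (comp_le_comp_right _ (iInf_le _ u)).trans (ldiv_comp_le _ _))

/-- The presheaf `ζ(−,y)` on `A` induced by a distributor `ζ : A ⇸ B`. -/
def distToP {A B : QCat Q} {W : Q.Obj} (ζ : QDist A B) (y : B.El W) :
    Presheaf A W :=
  ⟨fun x => ζ.d x y, fun x x' => ζ.dr x x' y⟩

/-- The copresheaf `φ(y,−)` on `A` induced by a distributor `φ : B ⇸ A`. -/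
def distToCp {A B : QCat Q} {W : Q.Obj} (φ : QDist B A) (y : B.El W) :
    Copresheaf A W :=
  ⟨fun x => φ.d y x, fun x x' => φ.dl y x x'⟩

/-- The presheaf `f ∘ A(−,a)` on `A`. -/
def scaledYo (A : QCat Q) {X W : Q.Obj} (a : A.El X) (f : Q.Hom X W) :
    Presheaf A W where
  p x := Q.comp f (A.hom x a)
  act x x' := by
    rw [Q.comp_assoc]
    exact comp_le_comp_left _ (A.comp_le x x' a)

/-- `ub : PA → P†A`, `μ ↦ A ↙ μ`. -/
def ubF (A : QCat Q) : QFun (PCat A) (PdCat A) where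
  map {X} μ :=
    { p := fun {W} a => ⨅ w : Σ V : Q.Obj, A.El V, ldiv (A.hom w.2 a) (μ.p w.2)
      act := fun a a' => le_iInf fun w => le_ldiv_iff.mpr (by
        rw [Q.comp_assoc]
        refine (comp_le_comp_left _
          ((comp_le_comp_right _ (iInf_le _ w)).trans (ldiv_comp_le _ _))).trans ?_
        exact A.comp_le w.2 a a') }
  mono μ μ' := le_iInf fun w => le_rdiv_iff.mpr (le_iInf fun w' => le_ldiv_iff.mpr (by
    rw [Q.comp_assoc]
    refine (comp_le_comp_left _
      ((comp_le_comp_right _ (iInf_le _ w')).trans (ldiv_comp_le _ _))).trans ?_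
    exact (comp_le_comp_right _ (iInf_le _ w')).trans (ldiv_comp_le _ _)))

/-- `lb : P†A → PA`, `λ ↦ λ ↘ A`. -/
def lbF (A : QCat Q) : QFun (PdCat A) (PCat A) where
  map {X} l :=
    { p := fun {W} x => ⨅ w : Σ V : Q.Obj, A.El V, rdiv (l.p w.2) (A.hom x w.2)
      act := fun x x' => le_iInf fun w => le_rdiv_iff.mpr (by
        rw [← Q.comp_assoc]
        refine (comp_le_comp_right _
          ((comp_le_comp_left _ (iInf_le _ w)).trans (comp_rdiv_le _ _))).trans ?_
        exact A.comp_le x x' w.2) }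
  mono l l' := le_iInf fun w => le_ldiv_iff.mpr (le_iInf fun w' => le_rdiv_iff.mpr (by
    rw [← Q.comp_assoc]
    refine (comp_le_comp_right _
      ((comp_le_comp_left _ (iInf_le _ w')).trans (comp_rdiv_le _ _))).trans ?_
    exact (comp_le_comp_left _ (iInf_le _ w')).trans (comp_rdiv_le _ _)))

/-- The presheaf category `P(*_X)` of the one-object `Q`-category `*_X`,
presented concretely: objects of type `W` are `Q`-arrows `X → W`,
with hom `f' ↙ f`. -/
def arrCat (Q : Quantaloid) (X : Q.Obj) : QCat Q where
  El W := Q.Hom X W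
  hom f f' := ldiv f' f
  one_le f := le_ldiv_iff.mpr (by rw [Q.one_comp])
  comp_le f f' f'' := le_ldiv_iff.mpr (by
    rw [Q.comp_assoc]
    exact (comp_le_comp_left _ (ldiv_comp_le f' f)).trans (ldiv_comp_le f'' f'))

/-- The cograph `(A(a,−))^♮ : P|a| ⇸ A`, `(f,x) ↦ A(a,x) ↙ f`. -/
def tensorDist (A : QCat Q) {X : Q.Obj} (a : A.El X) :
    QDist (arrCat Q X) A where
  d f x := ldiv (A.hom a x) f
  dl f x' x := le_ldiv_iff.mpr (by
    refine (Q.comp_assoc _ _ _).trans_le ?_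
    exact (comp_le_comp_left _ (ldiv_comp_le _ _)).trans (A.comp_le a x' x))
  dr f f' x := le_ldiv_iff.mpr (by
    refine (Q.comp_assoc _ _ _).trans_le ?_
    exact (comp_le_comp_left _ (ldiv_comp_le f' f)).trans (ldiv_comp_le _ _))

/-- The one-object `Q`-category `*_X`. -/
def unitCat (Q : Quantaloid) (X : Q.Obj) : QCat Q where
  El Y := PLift (X = Y)
  hom := fun {Y Z} y z => by
    obtain ⟨rfl⟩ := y
    obtain ⟨rfl⟩ := z
    exact Q.one X
  one_le := fun {Y} y => by
    obtain ⟨rfl⟩ := y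
    exact le_rfl
  comp_le := fun {Y₁ Y₂ Y₃} y₁ y₂ y₃ => by
    obtain ⟨rfl⟩ := y₁
    obtain ⟨rfl⟩ := y₂
    obtain ⟨rfl⟩ := y₃
    rw [show Q.comp (Q.one X) (Q.one X) = Q.one X from Q.one_comp _]

/-- The distributor `(A(a,−))^♮(f,−) : *_W ⇸ A`, `x ↦ A(a,x) ↙ f`. -/
def singleDist (A : QCat Q) {X W : Q.Obj} (a : A.El X) (f : Q.Hom X W) :
    QDist (unitCat Q W) A where
  d := fun {Y V} y v => by
    obtain ⟨rfl⟩ := y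
    exact ldiv (A.hom a v) f
  dl := fun {Y V' V} y v' v => by
    obtain ⟨rfl⟩ := y
    refine le_ldiv_iff.mpr ?_
    rw [Q.comp_assoc]
    exact (comp_le_comp_left _ (ldiv_comp_le _ _)).trans (A.comp_le a v' v)
  dr := fun {Y Y' V} y y' v => by
    obtain ⟨rfl⟩ := y
    obtain ⟨rfl⟩ := y'
    rw [show (unitCat Q W).hom (PLift.up rfl) (PLift.up rfl) = Q.one W from rfl,
      Q.comp_one]

/-- Pointwise meet of a family of distributors. -/
def meetDist {A B : QCat Q} {ι : Type} (φ : ι → QDist A B) : QDist A B where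
  d x y := ⨅ i, (φ i).d x y
  dl x y' y := le_iInf fun i =>
    (comp_le_comp_left _ (iInf_le _ i)).trans ((φ i).dl x y' y)
  dr x x' y := le_iInf fun i =>
    (comp_le_comp_right _ (iInf_le _ i)).trans ((φ i).dr x x' y)

/-- Auxiliary: the easy inequality, which always holds. -/
lemma stmt13_lhs_le {Q : Quantaloid} {A B : QCat Q} (ζs : QDist B A)
    {X W : Q.Obj} (l : Copresheaf A X) (y : B.El W) :
    (((coyoF A).graph).comp ζs).d y l ≤ (PdCat A).hom (distToCp ζs y) l := by
  refine iSup_le fun w => le_iInf fun u => le_rdiv_iff.mpr ?_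
  rw [← Q.comp_assoc]
  refine le_trans (comp_le_comp_right _ ?_) (ζs.dl y w.2 u.2)
  have h1 : ((coyoF A).graph).d w.2 l ≤ rdiv (l.p u.2) (A.hom w.2 u.2) :=
    iInf_le (fun u' : Σ V : Q.Obj, A.El V => rdiv (l.p u'.2) (A.hom w.2 u'.2)) u
  exact (comp_le_comp_left _ h1).trans (comp_rdiv_le _ _)

/-- Auxiliary: the candidate right adjoint of `ζ*`, namely
`η(a,y) = ζ*(y,−) ↘ A(a,−)`. -/
def stmt13_cand {Q : Quantaloid} {A B : QCat Q} (ζs : QDist B A) : QDist A B where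
  d a y := ⨅ w : Σ V : Q.Obj, A.El V, rdiv (ζs.d y w.2) (A.hom a w.2)
  dl x y' y := le_iInf fun w => le_rdiv_iff.mpr (by
    rw [← Q.comp_assoc]
    refine le_trans (comp_le_comp_right _ (ζs.dr y' y w.2)) ?_
    exact le_rdiv_iff.mp (iInf_le _ w))
  dr x x' y := le_iInf fun w => le_rdiv_iff.mpr (by
    rw [← Q.comp_assoc]
    refine le_trans (comp_le_comp_right _ (le_rdiv_iff.mp (iInf_le _ w))) ?_
    exact A.comp_le x x' w.2)

theorem stmt13 {Q : Quantaloid} {A B : QCat Q} (ζ : QDist A B) (ζs : QDist B A)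
    (h : DAdj ζ ζs) :
    ζs.IsLeftAdj ↔
      ∀ {X W : Q.Obj} (l : Copresheaf A X) (y : B.El W),
        (((coyoF A).graph).comp ζs).d y l = (PdCat A).hom (distToCp ζs y) l := by
  constructor
  · rintro ⟨η, h1, h2⟩ X W l y
    refine le_antisymm (stmt13_lhs_le ζs l y) ?_
    set f : Q.Hom W X := (PdCat A).hom (distToCp ζs y) l with hf
    have hfr : ∀ u : Σ V : Q.Obj, A.El V,
        Q.comp (l.p u.2) f ≤ ζs.d y u.2 := fun u =>
      le_rdiv_iff.mp (iInf_le (fun u' : Σ V : Q.Obj, A.El V =>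
        rdiv (l.p u'.2) ((distToCp ζs y).p u'.2)) u)
    have step1 : f ≤ Q.comp f ((η.comp ζs).d y y) := by
      conv_lhs => rw [← Q.comp_one f]
      exact comp_le_comp_left f ((B.one_le y).trans (h1 y y))
    refine step1.trans ?_
    have hcomp : (η.comp ζs).d y y =
        ⨆ w : Σ V : Q.Obj, A.El V, Q.comp (η.d w.2 y) (ζs.d y w.2) := rfl
    rw [hcomp, comp_iSup]
    refine iSup_le fun w => le_iSup_of_le w ?_
    rw [← Q.comp_assoc]
    refine comp_le_comp_right _ ?_
    -- f ∘ η(a, y) ≤ P†A(Y† a, l)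
    refine le_iInf fun u => le_rdiv_iff.mpr ?_
    rw [← Q.comp_assoc]
    refine le_trans (comp_le_comp_right _ (hfr u)) ?_
    refine le_trans ?_ (h2 w.2 u.2)
    exact le_iSup (fun b : Σ V : Q.Obj, B.El V =>
      Q.comp (ζs.d b.2 u.2) (η.d w.2 b.2)) ⟨W, y⟩
  · intro heq
    refine ⟨stmt13_cand ζs, ?_, ?_⟩
    · intro Y Y' y y'
      have key := heq (distToCp ζs y') y
      have hB : B.hom y y' ≤ (PdCat A).hom (distToCp ζs y) (distToCp ζs y') :=
        le_iInf fun w => le_rdiv_iff.mpr (ζs.dr y y' w.2)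
      rw [← key] at hB
      exact hB.trans (le_of_eq rfl)
    · intro Y Y' a a'
      refine iSup_le fun w => ?_
      exact le_rdiv_iff.mp (iInf_le (fun u : Σ V : Q.Obj, A.El V =>
        rdiv (ζs.d w.2 u.2) (A.hom a u.2)) ⟨Y', a'⟩)
end

section
/- Let A and B be P̂-algebras for the presheaf monad on Map(Q-Dist) (equivalently: the cographs Y_A^♮ and Y_B^♮ of the Yoneda embeddings are left adjoint Q-distributors, making A and B M-cocomplete). A left adjoint Q-distributor ζ : A ⇸ B is a P̂-algebra homomorphism, i.e. Y_B^♮ ∘ (ζ→)_♮ = ζ ∘ Y_A^♮, if and only if ζ is a right adjoint Q-distributor. -/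
set_option linter.unusedVariables false

open Quantaloid

variable {Q : Quantaloid}

section Aux

variable {Q : Quantaloid} {A B : QCat Q}

theorem qdist_ext {φ ψ : QDist A B}
    (h : ∀ (X Y : Q.Obj) (x : A.El X) (y : B.El Y), φ.d x y = ψ.d x y) : φ = ψ := by
  obtain ⟨d1, l1, r1⟩ := φ
  obtain ⟨d2, l2, r2⟩ := ψ
  have hd : @d1 = @d2 := by funext X Y x y; exact h X Y x y
  subst hd
  rfl

theorem le_comp_one_right {X Y : Q.Obj} (f : Q.Hom X Y) {g : Q.Hom X X}
    (hg : Q.one X ≤ g) : f ≤ Q.comp f g := by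
  calc f = Q.comp f (Q.one X) := (Q.comp_one f).symm
  _ ≤ _ := comp_le_comp_left f hg

theorem le_one_comp_left {X Y : Q.Obj} (f : Q.Hom X Y) {g : Q.Hom Y Y}
    (hg : Q.one Y ≤ g) : f ≤ Q.comp g f := by
  calc f = Q.comp (Q.one Y) f := (Q.one_comp f).symm
  _ ≤ _ := comp_le_comp_right f hg

theorem phom_apply {X X' W : Q.Obj} (μ : Presheaf A X) (μ' : Presheaf A X')
    (x : A.El W) : Q.comp ((PCat A).hom μ μ') (μ.p x) ≤ μ'.p x :=
  (comp_le_comp_right _ (iInf_le _ ⟨W, x⟩)).trans (ldiv_comp_le _ _)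

/-- The candidate left adjoint of a distributor `ζ : A ⇸ B`:
`η(y,x) = PA(ζ(−,y), Y_A x)`. -/
def etaD (ζ : QDist A B) : QDist B A where
  d {Y X} y x := (PCat A).hom (distToP ζ y) (yo A x)
  dl y y' y'' := le_iInf fun w => le_ldiv_iff.mpr (by
    rw [Q.comp_assoc]
    exact (comp_le_comp_left _ (phom_apply _ _ _)).trans (A.comp_le _ _ _))
  dr y y' x := le_iInf fun w => le_ldiv_iff.mpr (by
    rw [Q.comp_assoc]
    exact (comp_le_comp_left _ (ζ.dl _ _ _)).trans (phom_apply _ _ _))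

end Aux

theorem stmt14 {Q : Quantaloid} {A B : QCat Q}
    (hA : (QFun.cograph (yoF A)).IsLeftAdj)
    (hB : (QFun.cograph (yoF B)).IsLeftAdj)
    (ζ : QDist A B) (ζs : QDist B A) (h : DAdj ζ ζs) :
    ((yoF B).cograph).comp (compF ζs).graph = ζ.comp (yoF A).cograph ↔
      ζ.IsRightAdj := by
  obtain ⟨ρ, hρ1, hρ2⟩ := hB
  constructor
  · -- homomorphism ⇒ right adjoint
    intro he
    refine ⟨etaD ζ, ?_, ?_⟩
    · -- unit : B ≤ ζ ∘ η
      intro Yb' Yb b' b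
      have heq := congrArg
        (fun φ : QDist (PCat A) B => φ.d (distToP ζ b') b) he
      set μ : Presheaf A Yb' := distToP ζ b' with hμ
      set ν : Presheaf B Yb' := compP μ ζs with hν
      have h1 : B.hom b' b ≤ (PCat B).hom ν (yo B b) := by
        refine le_iInf fun w => le_ldiv_iff.mpr ?_
        show Q.comp (B.hom b' b)
          (⨆ u : Σ W : Q.Obj, A.El W, Q.comp (μ.p u.2) (ζs.d w.2 u.2))
            ≤ B.hom w.2 b
        rw [comp_iSup]
        refine iSup_le fun u => ?_
        rw [← Q.comp_assoc]
        refine (comp_le_comp_right _ (ζ.dl u.2 b' b)).trans ?_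
        refine le_trans ?_ (h.2 w.2 b)
        exact le_iSup (fun u' : Σ W : Q.Obj, A.El W =>
          Q.comp (ζ.d u'.2 b) (ζs.d w.2 u'.2)) u
      have h2 : B.hom b' b ≤
          (((yoF B).cograph).comp (compF ζs).graph).d μ b := by
        refine le_trans ?_ (le_iSup (fun w : Σ W : Q.Obj, Presheaf B W =>
          Q.comp ((PCat B).hom w.2 (yo B b)) ((PCat B).hom (compP μ ζs) w.2))
          ⟨Yb', ν⟩)
        exact (le_comp_one_right _ ((PCat B).one_le ν)).trans
          (comp_le_comp_right _ h1)
      have heq' : (((yoF B).cograph).comp (compF ζs).graph).d μ b =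
          (ζ.comp (yoF A).cograph).d μ b := heq
      rw [heq'] at h2
      exact h2
    · -- counit : η ∘ ζ ≤ A
      intro X X' x x'
      refine iSup_le fun w => ?_
      exact (comp_le_comp_right _ (iInf_le _ ⟨X, x⟩)).trans (ldiv_comp_le _ _)
  · -- right adjoint ⇒ homomorphism
    rintro ⟨η, hη1, hη2⟩
    refine qdist_ext fun X Yb μ b => le_antisymm ?_ ?_
    · -- ≤ : uses cocompleteness of B (via ρ) and η ⊣ ζ, ζ ⊣ ζs
      refine iSup_le fun w => ?_
      refine le_trans ((PCat B).comp_le (compP μ ζs) w.2 (yo B b)) ?_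
      -- now : PB(μζs, Yb) ≤ ⨆ x, ζ(x,b) ∘ PA(μ, Yx)
      refine le_trans (hρ1 (compP μ ζs) (yo B b)) ?_
      refine iSup_le fun wy => ?_
      -- wy.2 : B.El wy.1 ; term : ρ(y, Yb) ∘ PB(μζs, Y y)
      have hρb : ρ.d wy.2 (yo B b) ≤ B.hom wy.2 b := by
        refine le_trans ?_ (hρ2 wy.2 b)
        refine le_trans (le_one_comp_left _ ((PCat B).one_le (yo B b))) ?_
        exact le_iSup (fun w' : Σ W : Q.Obj, Presheaf B W =>
          Q.comp ((PCat B).hom w'.2 (yo B b)) (ρ.d wy.2 w'.2)) ⟨Yb, yo B b⟩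
      refine le_trans (comp_le_comp_right _ (hρb.trans (hη1 wy.2 b))) ?_
      show Q.comp (⨆ u : Σ W : Q.Obj, A.El W,
          Q.comp (ζ.d u.2 b) (η.d wy.2 u.2))
        ((PCat B).hom (compP μ ζs) (yo B wy.2)) ≤ _
      rw [iSup_comp]
      refine iSup_le fun u => ?_
      rw [Q.comp_assoc]
      refine le_trans (comp_le_comp_left (ζ.d u.2 b) ?_)
        (le_iSup (fun u' : Σ W : Q.Obj, A.El W =>
          Q.comp (ζ.d u'.2 b) ((PCat A).hom μ (yo A u'.2))) u)
      -- key : η(y,x) ∘ PB(μζs, Y y) ≤ PA(μ, Y x)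
      refine le_iInf fun v => le_ldiv_iff.mpr ?_
      -- v.2 : A.El v.1 ; goal : (η(y,x) ∘ PB(μζs,Yy)) ∘ μ(x₀) ≤ A(x₀, x)
      have hunit : μ.p v.2 ≤ ⨆ w'' : Σ W : Q.Obj, B.El W,
          Q.comp (μ.p v.2) (Q.comp (ζs.d w''.2 v.2) (ζ.d v.2 w''.2)) := by
        rw [← comp_iSup]
        refine le_trans (le_comp_one_right _ ((A.one_le v.2).trans
          (h.1 v.2 v.2))) le_rfl
      refine le_trans (comp_le_comp_left _ hunit) ?_
      rw [comp_iSup]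
      refine iSup_le fun w'' => ?_
      rw [← Q.comp_assoc (μ.p v.2), ← Q.comp_assoc]
      refine le_trans (comp_le_comp_right (ζ.d v.2 w''.2) ?_)
        (le_trans (le_iSup (fun u' : Σ W : Q.Obj, B.El W =>
          Q.comp (η.d u'.2 u.2) (ζ.d v.2 u'.2)) w'') (hη2 v.2 u.2))
      -- (η(y,x) ∘ PB(μζs,Yy)) ∘ (μ(x₀) ∘ ζs(w'',x₀)) ≤ η(w'', x)
      rw [Q.comp_assoc]
      refine le_trans (comp_le_comp_left (η.d wy.2 u.2) ?_) (η.dr w''.2 wy.2 u.2)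
      -- PB(μζs,Yy) ∘ (μ(x₀)∘ζs(w'',x₀)) ≤ B(w'', y)
      refine le_trans (comp_le_comp_left _
        (le_iSup (fun u' : Σ W : Q.Obj, A.El W =>
          Q.comp (μ.p u'.2) (ζs.d w''.2 u'.2)) v)) ?_
      exact phom_apply (A := B) (compP μ ζs) (yo B wy.2) w''.2
    · -- ≥ : uses only ζ ⊣ ζs
      refine iSup_le fun w => ?_
      have hkey : Q.comp (ζ.d w.2 b) ((PCat A).hom μ (yo A w.2)) ≤
          (PCat B).hom (compP μ ζs) (yo B b) := by
        refine le_iInf fun u => le_ldiv_iff.mpr ?_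
        show Q.comp _ (⨆ u' : Σ W : Q.Obj, A.El W,
          Q.comp (μ.p u'.2) (ζs.d u.2 u'.2)) ≤ B.hom u.2 b
        rw [comp_iSup]
        refine iSup_le fun u' => ?_
        rw [← Q.comp_assoc, Q.comp_assoc (ζ.d w.2 b)]
        refine (comp_le_comp_right _ (comp_le_comp_left _
          (phom_apply μ (yo A w.2) u'.2))).trans ?_
        refine (comp_le_comp_right _ (ζ.dr u'.2 w.2 b)).trans ?_
        refine le_trans ?_ (h.2 u.2 b)
        exact le_iSup (fun u'' : Σ W : Q.Obj, A.El W =>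
          Q.comp (ζ.d u''.2 b) (ζs.d u.2 u''.2)) u'
      refine le_trans hkey ?_
      refine le_trans (le_comp_one_right _ ((PCat B).one_le (compP μ ζs))) ?_
      exact le_iSup (fun w' : Σ W : Q.Obj, Presheaf B W =>
        Q.comp ((PCat B).hom w'.2 (yo B b)) ((PCat B).hom (compP μ ζs) w'.2))
        ⟨X, compP μ ζs⟩
end

section
/- A Q-category A is M-cocomplete if and only if it is M-complete. That is, the cograph Y_A^♮ : PA ⇸ A of the Yoneda embedding is a left adjoint Q-distributor if and only if the graph (Y†_A)_♮ : A ⇸ P†A of the co-Yoneda embedding is a right adjoint Q-distributor. -/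
set_option linter.unusedVariables false

open Quantaloid

variable {Q : Quantaloid}

section Stmt16Aux

variable {Q : Quantaloid} {A : QCat Q}

/-- Pointwise formula for `ub μ`. -/
def ubp (A : QCat Q) {X W : Q.Obj} (μ : Presheaf A X) (a : A.El W) : Q.Hom X W :=
  ⨅ w : Σ V : Q.Obj, A.El V, ldiv (A.hom w.2 a) (μ.p w.2)

/-- Pointwise formula for `lb λ`. -/
def lbp (A : QCat Q) {X W : Q.Obj} (l : Copresheaf A X) (a : A.El W) : Q.Hom W X :=
  ⨅ w : Σ V : Q.Obj, A.El V, rdiv (l.p w.2) (A.hom a w.2)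

lemma ubF_p {X W : Q.Obj} (μ : Presheaf A X) (a : A.El W) :
    ((ubF A).map μ).p a = ubp A μ a := rfl

lemma lbF_p {X W : Q.Obj} (l : Copresheaf A X) (a : A.El W) :
    ((lbF A).map l).p a = lbp A l a := rfl

lemma cograph_yo_d {X W : Q.Obj} (μ : Presheaf A X) (a : A.El W) :
    (QFun.cograph (yoF A)).d μ a = ubp A μ a := rfl

lemma graph_coyo_d {X W : Q.Obj} (a : A.El X) (l : Copresheaf A W) :
    (QFun.graph (coyoF A)).d a l = lbp A l a := rfl

lemma rdiv_anti {X Y Z : Q.Obj} {g g' : Q.Hom Y Z} (h : Q.Hom X Z) (hg : g ≤ g') :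
    rdiv g' h ≤ rdiv g h :=
  le_rdiv_iff.mpr ((comp_le_comp_right _ hg).trans (comp_rdiv_le _ _))

lemma ldiv_anti {X Y Z : Q.Obj} (h : Q.Hom X Z) {f f' : Q.Hom X Y} (hf : f ≤ f') :
    ldiv h f' ≤ ldiv h f :=
  le_ldiv_iff.mpr ((comp_le_comp_left _ hf).trans (ldiv_comp_le _ _))

lemma ubp_le {X W V : Q.Obj} (μ : Presheaf A X) (a : A.El W) (x : A.El V) :
    ubp A μ a ≤ ldiv (A.hom x a) (μ.p x) :=
  iInf_le (fun w : Σ V : Q.Obj, A.El V => ldiv (A.hom w.2 a) (μ.p w.2))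
    (⟨V, x⟩ : Σ V : Q.Obj, A.El V)

lemma lbp_le {X W V : Q.Obj} (l : Copresheaf A X) (a : A.El W) (x : A.El V) :
    lbp A l a ≤ rdiv (l.p x) (A.hom a x) :=
  iInf_le (fun w : Σ V : Q.Obj, A.El V => rdiv (l.p w.2) (A.hom a w.2))
    (⟨V, x⟩ : Σ V : Q.Obj, A.El V)

lemma le_ubp {X W : Q.Obj} {μ : Presheaf A X} {a : A.El W} {f : Q.Hom X W}
    (h : ∀ w : Σ V : Q.Obj, A.El V, Q.comp f (μ.p w.2) ≤ A.hom w.2 a) :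
    f ≤ ubp A μ a :=
  le_iInf fun w => le_ldiv_iff.mpr (h w)

lemma le_lbp {X W : Q.Obj} {l : Copresheaf A X} {a : A.El W} {f : Q.Hom W X}
    (h : ∀ w : Σ V : Q.Obj, A.El V, Q.comp (l.p w.2) f ≤ A.hom a w.2) :
    f ≤ lbp A l a :=
  le_iInf fun w => le_rdiv_iff.mpr (h w)

lemma pc_le {X X' V : Q.Obj} (μ : Presheaf A X) (μ' : Presheaf A X') (x : A.El V) :
    (PCat A).hom μ μ' ≤ ldiv (μ'.p x) (μ.p x) := by
  exact iInf_le (fun w : Σ U : Q.Obj, A.El U => ldiv (μ'.p w.2) (μ.p w.2))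
    (⟨V, x⟩ : Σ U : Q.Obj, A.El U)

lemma pd_le {X X' V : Q.Obj} (l : Copresheaf A X) (l' : Copresheaf A X') (x : A.El V) :
    (PdCat A).hom l l' ≤ rdiv (l'.p x) (l.p x) := by
  exact iInf_le (fun w : Σ U : Q.Obj, A.El U => rdiv (l'.p w.2) (l.p w.2))
    (⟨V, x⟩ : Σ U : Q.Obj, A.El U)

/-- unit of `ub ⊣ lb`, pointwise: `μ ≤ lb (ub μ)`. -/
lemma mu_le_lb_ub {X V : Q.Obj} (μ : Presheaf A X) (x : A.El V) :
    μ.p x ≤ lbp A ((ubF A).map μ) x := by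
  refine le_lbp fun w => ?_
  rw [ubF_p]
  exact (comp_le_comp_right _ (ubp_le μ w.2 x)).trans (ldiv_comp_le _ _)

/-- counit of `ub ⊣ lb`, pointwise: `λ ≤ ub (lb λ)`. -/
lemma l_le_ub_lb {X V : Q.Obj} (l : Copresheaf A X) (a : A.El V) :
    l.p a ≤ ubp A ((lbF A).map l) a := by
  refine le_ubp fun w => ?_
  rw [lbF_p]
  exact (comp_le_comp_left _ (lbp_le l w.2 a)).trans (comp_rdiv_le _ _)

lemma ubp_anti {X W : Q.Obj} {μ ν : Presheaf A X} (a : A.El W)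
    (h : ∀ w : Σ V : Q.Obj, A.El V, μ.p w.2 ≤ ν.p w.2) :
    ubp A ν a ≤ ubp A μ a :=
  le_iInf fun w => (ubp_le ν a w.2).trans (ldiv_anti _ (h w))

lemma lbp_anti {X W : Q.Obj} {l m : Copresheaf A X} (a : A.El W)
    (h : ∀ w : Σ V : Q.Obj, A.El V, l.p w.2 ≤ m.p w.2) :
    lbp A m a ≤ lbp A l a :=
  le_iInf fun w => (lbp_le m a w.2).trans (rdiv_anti _ (h w))

/-- The canonical candidate right adjoint `Ψ : A ⇸ PA`, `Ψ(a,μ) = lb(ub μ)(a)`. -/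
def Psi (A : QCat Q) : QDist A (PCat A) where
  d a μ := lbp A ((ubF A).map μ) a
  dl := by
    intro X W' W a μ' μ
    refine le_lbp fun w => ?_
    erw [ubF_p, ← Q.comp_assoc]
    have h1 : Q.comp (ubp A μ w.2) ((PCat A).hom μ' μ) ≤ ubp A μ' w.2 := by
      have hm := (ubF A).mono μ' μ
      have h2 := pd_le ((ubF A).map μ') ((ubF A).map μ) w.2
      erw [ubF_p, ubF_p] at h2
      exact (comp_le_comp_left _ (hm.trans h2)).trans (comp_rdiv_le _ _)
    refine (comp_le_comp_right _ h1).trans ?_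
    have h3 := lbp_le ((ubF A).map μ') a w.2
    erw [ubF_p] at h3
    exact (comp_le_comp_left _ h3).trans (comp_rdiv_le _ _)
  dr := by
    intro X X' W a a' μ
    exact ((lbF A).map ((ubF A).map μ)).act a a'

/-- The canonical candidate left adjoint `H : P†A ⇸ A`, `H(λ,a) = ub(lb λ)(a)`. -/
def Hd (A : QCat Q) : QDist (PdCat A) A where
  d l a := ubp A ((lbF A).map l) a
  dl := by
    intro X W' W l a' a
    exact ((ubF A).map ((lbF A).map l)).act a' a
  dr := by
    intro X X' W l l' a
    refine le_ubp fun w => ?_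
    erw [lbF_p, Q.comp_assoc]
    have h1 : Q.comp ((PdCat A).hom l l') (lbp A l w.2) ≤ lbp A l' w.2 := by
      have hm := (lbF A).mono l l'
      have h2 := pc_le ((lbF A).map l) ((lbF A).map l') w.2
      erw [lbF_p, lbF_p] at h2
      exact (comp_le_comp_right _ (hm.trans h2)).trans (ldiv_comp_le _ _)
    refine (comp_le_comp_left _ h1).trans ?_
    have h3 := ubp_le ((lbF A).map l') a w.2
    erw [lbF_p] at h3
    exact (comp_le_comp_right _ h3).trans (ldiv_comp_le _ _)

lemma Psi_d {X W : Q.Obj} (a : A.El X) (μ : Presheaf A W) :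
    (Psi A).d a μ = lbp A ((ubF A).map μ) a := rfl

lemma Hd_d {X W : Q.Obj} (l : Copresheaf A X) (a : A.El W) :
    (Hd A).d l a = ubp A ((lbF A).map l) a := rfl

end Stmt16Aux

theorem stmt16 {Q : Quantaloid} (A : QCat Q) :
    (QFun.cograph (yoF A)).IsLeftAdj ↔ (QFun.graph (coyoF A)).IsRightAdj := by
  constructor
  · rintro ⟨ψ, hu, hc⟩
    have hpsi : ∀ {X W : Q.Obj} (a : A.El X) (μ : Presheaf A W),
        ψ.d a μ ≤ (Psi A).d a μ := by
      intro X W a μ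
      rw [Psi_d]
      refine le_lbp fun w => ?_
      rw [ubF_p]
      refine le_trans ?_ (hc a w.2)
      exact le_iSup_of_le ⟨W, μ⟩ le_rfl
    refine ⟨Hd A, ?_, ?_⟩
    · intro X X' l l'
      refine ((lbF A).mono l l').trans ?_
      refine (hu ((lbF A).map l) ((lbF A).map l')).trans ?_
      refine iSup_le fun u => le_iSup_of_le u (comp_le_comp ?_ le_rfl)
      refine (hpsi u.2 ((lbF A).map l')).trans ?_
      erw [Psi_d, graph_coyo_d]
      refine lbp_anti u.2 fun w => ?_
      erw [ubF_p]
      exact l_le_ub_lb l' w.2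
    · intro W W' a a'
      refine iSup_le fun u => ?_
      have h1 : (Hd A).d u.2 a' ≤ ldiv (A.hom a a') (lbp A u.2 a) := by
        erw [Hd_d]
        have h2 := ubp_le ((lbF A).map u.2) a' a
        erw [lbF_p] at h2
        exact h2
      refine le_trans (comp_le_comp_right _ h1) ?_
      erw [graph_coyo_d]
      exact ldiv_comp_le _ _
  · rintro ⟨η, hu, hc⟩
    have heta : ∀ {X W : Q.Obj} (l : Copresheaf A X) (a : A.El W),
        η.d l a ≤ (Hd A).d l a := by
      intro X W l a
      rw [Hd_d]
      refine le_ubp fun w => ?_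
      rw [lbF_p]
      refine le_trans ?_ (hc w.2 a)
      exact le_iSup_of_le ⟨X, l⟩ le_rfl
    refine ⟨Psi A, ?_, ?_⟩
    · intro X X' μ μ'
      refine ((ubF A).mono μ μ').trans ?_
      refine (hu ((ubF A).map μ) ((ubF A).map μ')).trans ?_
      refine iSup_le fun u => le_iSup_of_le u (comp_le_comp le_rfl ?_)
      refine (heta ((ubF A).map μ) u.2).trans ?_
      erw [Hd_d, cograph_yo_d]
      refine ubp_anti u.2 fun w => ?_
      erw [lbF_p]
      exact mu_le_lb_ub μ w.2
    · intro W W' a a'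
      refine iSup_le fun u => ?_
      have h1 : (Psi A).d a u.2 ≤ rdiv (ubp A u.2 a') (A.hom a a') := by
        erw [Psi_d]
        have h2 := lbp_le ((ubF A).map u.2) a a'
        erw [ubF_p] at h2
        exact h2
      refine le_trans (comp_le_comp_left _ h1) ?_
      erw [cograph_yo_d]
      exact comp_rdiv_le _ _
end

section
/- A Q-category A is M-cocomplete if and only if it is M-tensored and M-conically cocomplete. -/
set_option linter.unusedVariables false

open Quantaloid

variable {Q : Quantaloid}

section MainProof

variable {Q : Quantaloid} {A : QCat Q}

private lemma Yd_eq {X V : Q.Obj} (μ : Presheaf A X) (v : A.El V) :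
    (QFun.cograph (yoF A)).d μ v
      = ⨅ w : Σ W : Q.Obj, A.El W, ldiv (A.hom w.2 v) (μ.p w.2) := rfl

private lemma le_Yd_iff {X V : Q.Obj} {μ : Presheaf A X} {v : A.El V} {g : Q.Hom X V} :
    g ≤ (QFun.cograph (yoF A)).d μ v ↔
      ∀ w : Σ W : Q.Obj, A.El W, Q.comp g (μ.p w.2) ≤ A.hom w.2 v := by
  rw [Yd_eq]
  constructor
  · intro h w; exact le_ldiv_iff.mp ((le_iInf_iff.mp h) w)
  · intro h; exact le_iInf fun w => le_ldiv_iff.mpr (h w)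

private lemma Yd_scaledYo {X W V : Q.Obj} (a : A.El X) (f : Q.Hom X W) (v : A.El V) :
    (QFun.cograph (yoF A)).d (scaledYo A a f) v = ldiv (A.hom a v) f := by
  apply le_antisymm
  · refine le_ldiv_iff.mpr ?_
    have h1 : (QFun.cograph (yoF A)).d (scaledYo A a f) v
        ≤ ldiv (A.hom a v) (Q.comp f (A.hom a a)) := by
      rw [Yd_eq]; exact iInf_le _ (⟨X, a⟩ : Σ W : Q.Obj, A.El W)
    have h2 : f ≤ Q.comp f (A.hom a a) := by
      have := comp_le_comp_left f (A.one_le a)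
      rwa [Q.comp_one] at this
    exact (comp_le_comp h1 h2).trans (ldiv_comp_le _ _)
  · rw [le_Yd_iff]
    intro w
    show Q.comp (ldiv (A.hom a v) f) (Q.comp f (A.hom w.2 a)) ≤ A.hom w.2 v
    rw [← Q.comp_assoc]
    exact (comp_le_comp_right _ (ldiv_comp_le _ _)).trans (A.comp_le w.2 a v)

private lemma ldiv_le_homP {X W W' : Q.Obj} (a : A.El X) (f : Q.Hom X W) (f' : Q.Hom X W') :
    ldiv f' f ≤ (PCat A).hom (scaledYo A a f) (scaledYo A a f') := by
  refine le_iInf fun w => le_ldiv_iff.mpr ?_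
  show Q.comp (ldiv f' f) (Q.comp f (A.hom w.2 a)) ≤ Q.comp f' (A.hom w.2 a)
  rw [← Q.comp_assoc]
  exact comp_le_comp_right _ (ldiv_comp_le _ _)

private lemma tensored_of_cocomplete (h : (QFun.cograph (yoF A)).IsLeftAdj)
    {X : Q.Obj} (a : A.El X) : (tensorDist A a).IsLeftAdj := by
  obtain ⟨ρ, hu, hc⟩ := h
  refine ⟨⟨fun {V W} v f => ρ.d v (scaledYo A a f), ?_, ?_⟩, ?_, ?_⟩
  · intro V W' W v f' f
    refine le_trans ?_ (ρ.dl v (scaledYo A a f') (scaledYo A a f))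
    exact comp_le_comp_right _ (ldiv_le_homP a f' f)
  · intro V V' W v v' f
    exact ρ.dr v v' (scaledYo A a f)
  · intro W W' f f'
    calc (arrCat Q X).hom f f'
        ≤ (PCat A).hom (scaledYo A a f) (scaledYo A a f') := ldiv_le_homP a f f'
      _ ≤ (ρ.comp (QFun.cograph (yoF A))).d (scaledYo A a f) (scaledYo A a f') := hu _ _
      _ ≤ _ := by
          refine iSup_le fun v => le_iSup_of_le v ?_
          exact comp_le_comp_left _ (le_of_eq (Yd_scaledYo a f v.2))
  · intro Y Y' y y'
    refine iSup_le fun w => ?_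
    refine le_trans ?_ (hc y y')
    refine le_iSup_of_le ⟨w.1, scaledYo A a w.2⟩ ?_
    exact comp_le_comp_right _ (le_of_eq (Yd_scaledYo a w.2 y').symm)

private lemma single_of_tensor (hT : ∀ {X : Q.Obj} (a : A.El X), (tensorDist A a).IsLeftAdj)
    {W X : Q.Obj} (a : A.El W) (g : Q.Hom W X) : (singleDist A a g).IsLeftAdj := by
  obtain ⟨ψ, hu, hc⟩ := hT a
  refine ⟨⟨fun {V Y} v y => by obtain ⟨rfl⟩ := y; exact ψ.d v g, ?_, ?_⟩, ?_, ?_⟩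
  · intro V Y' Y v y' y
    obtain ⟨rfl⟩ := y'; obtain ⟨rfl⟩ := y
    show Q.comp (Q.one X) (ψ.d v g) ≤ ψ.d v g
    rw [Q.one_comp]
  · intro V V' Y v v' y
    obtain ⟨rfl⟩ := y
    exact ψ.dr v v' g
  · intro Y Y' y y'
    obtain ⟨rfl⟩ := y; obtain ⟨rfl⟩ := y'
    have h1 : Q.one X ≤ (arrCat Q W).hom g g := le_ldiv_iff.mpr (by rw [Q.one_comp])
    exact h1.trans (hu g g)
  · intro Y Y' y y'
    refine iSup_le fun w => ?_
    obtain ⟨W', hw⟩ := w; obtain ⟨rfl⟩ := hw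
    refine le_trans ?_ (hc y y')
    exact le_iSup_of_le ⟨X, g⟩ le_rfl

private def supPresheaf (A : QCat Q) {ι : Type} {X : Q.Obj} {T : ι → Q.Obj}
    (x : ∀ i, A.El (T i)) (f : ∀ i, Q.Hom (T i) X) : Presheaf A X where
  p {W} w := ⨆ i, Q.comp (f i) (A.hom w (x i))
  act {W W'} w w' := by
    rw [iSup_comp]
    refine iSup_le fun i => le_iSup_of_le i ?_
    rw [Q.comp_assoc]
    exact comp_le_comp_left _ (A.comp_le w w' (x i))

private lemma meet_le_Yd {ι : Type} {X : Q.Obj} {T : ι → Q.Obj}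
    (x : ∀ i, A.El (T i)) (f : ∀ i, Q.Hom (T i) X) {V : Q.Obj} (v : A.El V) :
    (⨅ i, ldiv (A.hom (x i) v) (f i))
      ≤ (QFun.cograph (yoF A)).d (supPresheaf A x f) v := by
  rw [le_Yd_iff]
  intro w
  show Q.comp _ (⨆ i, Q.comp (f i) (A.hom w.2 (x i))) ≤ A.hom w.2 v
  rw [comp_iSup]
  refine iSup_le fun i => ?_
  rw [← Q.comp_assoc]
  exact (comp_le_comp_right _
    ((comp_le_comp_right _ (iInf_le _ i)).trans (ldiv_comp_le _ _))).trans
      (A.comp_le w.2 (x i) v)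

private lemma Yd_le_meet {ι : Type} {X : Q.Obj} {T : ι → Q.Obj}
    (x : ∀ i, A.El (T i)) (f : ∀ i, Q.Hom (T i) X) {V : Q.Obj} (v : A.El V) :
    (QFun.cograph (yoF A)).d (supPresheaf A x f) v
      ≤ ⨅ i, ldiv (A.hom (x i) v) (f i) := by
  refine le_iInf fun i => le_ldiv_iff.mpr ?_
  have h1 : f i ≤ (supPresheaf A x f).p (x i) := by
    refine le_iSup_of_le i ?_
    have := comp_le_comp_left (f i) (A.one_le (x i))
    rwa [Q.comp_one] at this
  have h2 : Q.comp ((QFun.cograph (yoF A)).d (supPresheaf A x f) v)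
      ((supPresheaf A x f).p (x i)) ≤ A.hom (x i) v :=
    le_Yd_iff.mp le_rfl ⟨T i, x i⟩
  exact (comp_le_comp_left _ h1).trans h2

private lemma conic_of_cocomplete (h : (QFun.cograph (yoF A)).IsLeftAdj)
    {ι : Type} {X : Q.Obj} {T : ι → Q.Obj} (x : ∀ i, A.El (T i))
    (f : ∀ i, Q.Hom (T i) X) :
    (meetDist fun i => singleDist A (x i) (f i)).IsLeftAdj := by
  obtain ⟨ρ, hu, hc⟩ := h
  refine ⟨⟨fun {V Y} v y => by obtain ⟨rfl⟩ := y; exact ρ.d v (supPresheaf A x f),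
    ?_, ?_⟩, ?_, ?_⟩
  · intro V Y' Y v y' y
    obtain ⟨rfl⟩ := y'; obtain ⟨rfl⟩ := y
    show Q.comp (Q.one X) (ρ.d v (supPresheaf A x f)) ≤ ρ.d v (supPresheaf A x f)
    rw [Q.one_comp]
  · intro V V' Y v v' y
    obtain ⟨rfl⟩ := y
    exact ρ.dr v v' (supPresheaf A x f)
  · intro Y Y' y y'
    obtain ⟨rfl⟩ := y; obtain ⟨rfl⟩ := y'
    refine le_trans ((PCat A).one_le (supPresheaf A x f)) (le_trans (hu _ _) ?_)
    refine iSup_le fun v => le_iSup_of_le v ?_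
    exact comp_le_comp_left _ (Yd_le_meet x f v.2)
  · intro Y Y' y y'
    refine iSup_le fun w => ?_
    obtain ⟨W, hw⟩ := w; obtain ⟨rfl⟩ := hw
    refine le_trans ?_ (hc y y')
    refine le_iSup_of_le ⟨X, supPresheaf A x f⟩ ?_
    exact comp_le_comp_right _ (meet_le_Yd x f y')

private lemma cocomplete_of
    (hT : ∀ {X : Q.Obj} (a : A.El X), (tensorDist A a).IsLeftAdj)
    (hC : ∀ {ι : Type} {X : Q.Obj} {T : ι → Q.Obj} (x : ∀ i, A.El (T i))
      (f : ∀ i, Q.Hom (T i) X), (∀ i, (singleDist A (x i) (f i)).IsLeftAdj) →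
      (meetDist fun i => singleDist A (x i) (f i)).IsLeftAdj) :
    (QFun.cograph (yoF A)).IsLeftAdj := by
  refine ⟨⟨fun {V W} v μ => ⨅ w : Σ V' : Q.Obj, A.El V',
      rdiv ((QFun.cograph (yoF A)).d μ w.2) (A.hom v w.2), ?_, ?_⟩, ?_, ?_⟩
  · intro V W' W v μ' μ
    refine le_iInf fun w => le_rdiv_iff.mpr ?_
    rw [← Q.comp_assoc]
    have ha : Q.comp ((QFun.cograph (yoF A)).d μ w.2) ((PCat A).hom μ' μ)
        ≤ (QFun.cograph (yoF A)).d μ' w.2 := (QFun.cograph (yoF A)).dr μ' μ w.2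
    have hb : (⨅ u : Σ V' : Q.Obj, A.El V',
        rdiv ((QFun.cograph (yoF A)).d μ' u.2) (A.hom v u.2))
        ≤ rdiv ((QFun.cograph (yoF A)).d μ' w.2) (A.hom v w.2) := iInf_le _ w
    exact (comp_le_comp ha hb).trans (comp_rdiv_le _ _)
  · intro V V' W v v' μ
    refine le_iInf fun w => le_rdiv_iff.mpr ?_
    rw [← Q.comp_assoc]
    have hb : Q.comp ((QFun.cograph (yoF A)).d μ w.2)
        (⨅ u : Σ V'' : Q.Obj, A.El V'',
          rdiv ((QFun.cograph (yoF A)).d μ u.2) (A.hom v' u.2)) ≤ A.hom v' w.2 :=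
      (comp_le_comp_left _ (iInf_le _ w)).trans (comp_rdiv_le _ _)
    exact (comp_le_comp_right _ hb).trans (A.comp_le v v' w.2)
  · intro W W' μ μ'
    obtain ⟨ψ, hu, hcψ⟩ := hC (ι := Σ V : Q.Obj, A.El V) (T := fun i => i.1)
      (fun i => i.2) (fun i => μ.p i.2)
      (fun i => single_of_tensor hT i.2 (μ.p i.2))
    have h1 : ∀ {V : Q.Obj} (v : A.El V),
        Q.comp ((PCat A).hom μ μ') (ψ.d v (PLift.up rfl))
          ≤ ⨅ w : Σ V' : Q.Obj, A.El V',
              rdiv ((QFun.cograph (yoF A)).d μ' w.2) (A.hom v w.2) := by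
      intro V v
      refine le_iInf fun w => le_rdiv_iff.mpr ?_
      rw [← Q.comp_assoc]
      have ha : Q.comp ((QFun.cograph (yoF A)).d μ' w.2) ((PCat A).hom μ μ')
          ≤ (QFun.cograph (yoF A)).d μ w.2 := (QFun.cograph (yoF A)).dr μ μ' w.2
      have hb : Q.comp ((QFun.cograph (yoF A)).d μ w.2) (ψ.d v (PLift.up rfl))
          ≤ A.hom v w.2 :=
        le_trans (le_iSup_of_le ⟨W, PLift.up rfl⟩ le_rfl) (hcψ v w.2)
      exact (comp_le_comp_right _ ha).trans hb
    have h3 : Q.comp ((PCat A).hom μ μ')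
        ((ψ.comp (meetDist fun i : (Σ V : Q.Obj, A.El V) =>
          singleDist A i.2 (μ.p i.2))).d (PLift.up rfl) (PLift.up rfl))
        ≤ ⨆ v : Σ V : Q.Obj, A.El V,
            Q.comp (⨅ w : Σ V' : Q.Obj, A.El V',
                rdiv ((QFun.cograph (yoF A)).d μ' w.2) (A.hom v.2 w.2))
              ((QFun.cograph (yoF A)).d μ v.2) := by
      show Q.comp _ (⨆ v : Σ V : Q.Obj, A.El V,
        Q.comp (ψ.d v.2 (PLift.up rfl)) ((QFun.cograph (yoF A)).d μ v.2)) ≤ _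
      rw [comp_iSup]
      refine iSup_le fun v => le_iSup_of_le v ?_
      rw [← Q.comp_assoc]
      exact comp_le_comp_right _ (h1 v.2)
    calc (PCat A).hom μ μ' = Q.comp ((PCat A).hom μ μ') (Q.one W) :=
        (Q.comp_one _).symm
      _ ≤ Q.comp ((PCat A).hom μ μ')
          ((ψ.comp (meetDist fun i : (Σ V : Q.Obj, A.El V) =>
            singleDist A i.2 (μ.p i.2))).d (PLift.up rfl) (PLift.up rfl)) :=
        comp_le_comp_left _ (hu (PLift.up rfl) (PLift.up rfl))
      _ ≤ _ := h3
  · intro Y Y' y y'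
    refine iSup_le fun w => ?_
    exact (comp_le_comp_left _ (iInf_le _ ⟨Y', y'⟩)).trans (comp_rdiv_le _ _)

end MainProof

theorem stmt19 {Q : Quantaloid} (A : QCat Q) :
    (QFun.cograph (yoF A)).IsLeftAdj ↔
      ((∀ {X : Q.Obj} (a : A.El X), (tensorDist A a).IsLeftAdj) ∧
       (∀ {ι : Type} {X : Q.Obj} {T : ι → Q.Obj} (x : ∀ i, A.El (T i))
          (f : ∀ i, Q.Hom (T i) X),
          (∀ i, (singleDist A (x i) (f i)).IsLeftAdj) →
          (meetDist fun i => singleDist A (x i) (f i)).IsLeftAdj)) := by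
  constructor
  · intro h
    exact ⟨fun {X} a => tensored_of_cocomplete h a,
      fun {ι X T} x f hi => conic_of_cocomplete h x f⟩
  · rintro ⟨hT, hC⟩
    exact cocomplete_of (fun {X} a => hT a) (fun {ι X T} x f hi => hC x f hi)
end
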